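/- Let m, n ≥ 1, A ∈ ℝ^{m×n} with max_{i,j}|A_{ij}| ≤ 1, ν ∈ (0, 1/max{m,n}), and α, c > 0. Let (x', y') ∈ Δ^n_ν × Δ^m_ν, and suppose (x*, y*) ∈ Δ^n_ν × Δ^m_ν is the exact saddle point of min_{x ∈ Δ^n_ν} max_{y ∈ Δ^m_ν} yᵀAx + α·KL(x‖x') − α·KL(y‖y'), i.e. x* minimizes x ↦ (y*)ᵀAx + α·KL(x‖x') over Δ^n_ν and y* maximizes y ↦ yᵀAx* − α·KL(y‖y') over Δ^m_ν. Suppose KL(x*‖x') + KL(y*‖y') ≤ c·α². Let x̃ minimize x ↦ (y')ᵀAx + α·KL(x‖x') over Δ^n_ν and let ỹ maximize y ↦ yᵀAx' − α·KL(y‖y') over Δ^m_ν. Then for every j ∈ [n], exp(−2√(2c))·x̃_j ≤ x*_j ≤ exp(2√(2c))·x̃_j, and for every i ∈ [m], exp(−2√(2c))·ỹ_i ≤ y*_i ≤ exp(2√(2c))·ỹ_i. -/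

import Mathlib

/-!
Both `x*` and `x̃` minimize `⟨g, x⟩ + α KL(x‖x')` over the truncated simplex, with costs
`g = Aᵀy*` and `g = Aᵀy'`. By Pinsker's inequality `‖y* - y'‖₁ ≤ √(2 KL(y*‖y')) ≤ α √(2c)`, so
the two costs differ by at most `α √(2c)` in every coordinate. Such minimizers are
multiplicatively stable in the cost: if `u j > v j` then `u l < v l` for some `l`, and the
first-order conditions for shifting mass from `j` to `l` (at `u`) and from `l` to `j` (at `v`)
add up to `α log (u j / v j) ≤ 2 ‖g - h‖_∞`. The `y` side is the same with the cost `-A x`.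
-/

open Matrix

noncomputable def KLdiv {k : ℕ} (a b : Fin k → ℝ) : ℝ := ∑ i, a i * Real.log (a i / b i)

open Finset Set

-- Multiplied by `t`, this is `t log t - t + 1 ≥ 3 (t - 1)² / (2t + 4)`, the one-variable form of
-- `sq_div_le_mul_log_div_sub_add`.
theorem Real.sub_one_mul_div_le_log {t : ℝ} (ht : 0 < t) :
    (t - 1) * (5 * t + 1) / (2 * t * (t + 2)) ≤ Real.log t := by
  set f : ℝ → ℝ := fun x => Real.log x - (x - 1) * (5 * x + 1) / (2 * x * (x + 2))
  have hf : ∀ x, 0 < x → HasDerivAt f ((x - 1) ^ 3 / (x ^ 2 * (x + 2) ^ 2)) x := by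
    intro x hx
    have hnum : HasDerivAt (fun x => (x - 1) * (5 * x + 1)) (10 * x - 4) x :=
      (((hasDerivAt_id' x).sub_const 1).mul
        (((hasDerivAt_id' x).const_mul 5).add_const 1)).congr_deriv (by ring)
    have hden : HasDerivAt (fun x => 2 * x * (x + 2)) (4 * x + 4) x :=
      (((hasDerivAt_id' x).const_mul 2).mul
        ((hasDerivAt_id' x).add_const 2)).congr_deriv (by ring)
    refine ((Real.hasDerivAt_log hx.ne').sub (hnum.div hden (by positivity))).congr_deriv ?_
    field_simp
    ring
  have hcont : ContinuousOn f (Ioi 0) := fun x hx => (hf x hx).continuousAt.continuousWithinAt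
  have hf1 : f 1 = 0 := by norm_num [f]
  suffices 0 ≤ f t by simpa [f] using this
  rcases le_total 1 t with h1t | ht1
  · have hmono : MonotoneOn f (Ici 1) :=
      monotoneOn_of_hasDerivWithinAt_nonneg (convex_Ici 1)
        (hcont.mono fun x (hx : 1 ≤ x) => zero_lt_one.trans_le hx)
        (fun x hx => (hf x (zero_lt_one.trans (by simpa using hx))).hasDerivWithinAt)
        (fun x hx => by
          simp only [interior_Ici, Set.mem_Ioi] at hx
          have : 0 ≤ x - 1 := by linarith
          positivity)
    simpa [hf1] using hmono (mem_Ici.2 le_rfl) h1t h1t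
  · have hanti : AntitoneOn f (Ioc 0 1) :=
      antitoneOn_of_hasDerivWithinAt_nonpos (convex_Ioc 0 1)
        (hcont.mono Ioc_subset_Ioi_self)
        (fun x hx => (hf x (by rw [interior_Ioc] at hx; exact hx.1)).hasDerivWithinAt)
        (fun x hx => by
          simp only [interior_Ioc, Set.mem_Ioo] at hx
          exact div_nonpos_of_nonpos_of_nonneg
            ((Odd.pow_nonpos_iff (by decide)).2 (by linarith)) (by positivity))
    simpa [hf1] using hanti ⟨ht, ht1⟩ ⟨one_pos, le_rfl⟩ ht1

theorem sq_div_le_mul_log_div_sub_add {p q : ℝ} (hp : 0 < p) (hq : 0 < q) :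
    3 * (p - q) ^ 2 / (2 * p + 4 * q) ≤ p * Real.log (p / q) - p + q := by
  have h := mul_le_mul_of_nonneg_left (Real.sub_one_mul_div_le_log (div_pos hp hq)) hp.le
  have hrw : p * ((p / q - 1) * (5 * (p / q) + 1) / (2 * (p / q) * (p / q + 2)))
      = 3 * (p - q) ^ 2 / (2 * p + 4 * q) + p - q := by
    field_simp
    ring
  linarith

section KLdiv

variable {k : ℕ} {p q : Fin k → ℝ}

theorem sum_sq_div_le_KLdiv (hp : ∀ i, 0 < p i) (hq : ∀ i, 0 < q i)
    (hpq : ∑ i, p i = ∑ i, q i) :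
    ∑ i, 3 * (p i - q i) ^ 2 / (2 * p i + 4 * q i) ≤ KLdiv p q := by
  have hKL : KLdiv p q = ∑ i, (p i * Real.log (p i / q i) - p i + q i) := by
    rw [sum_add_distrib, sum_sub_distrib, hpq, sub_add_cancel, KLdiv]
  rw [hKL]
  exact sum_le_sum fun i _ => sq_div_le_mul_log_div_sub_add (hp i) (hq i)

theorem KLdiv_nonneg (hp : ∀ i, 0 < p i) (hq : ∀ i, 0 < q i)
    (hpq : ∑ i, p i = ∑ i, q i) : 0 ≤ KLdiv p q :=
  (sum_nonneg fun i _ => by have := hp i; have := hq i; positivity).trans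
    (sum_sq_div_le_KLdiv hp hq hpq)

/-- Pinsker's inequality, via the weighted Cauchy–Schwarz inequality with weights
`(2 pᵢ + 4 qᵢ) / 3`, which sum to `2`. -/
theorem sum_abs_sub_le_sqrt_two_mul_KLdiv (hp : ∀ i, 0 < p i) (hq : ∀ i, 0 < q i)
    (hp1 : ∑ i, p i = 1) (hq1 : ∑ i, q i = 1) :
    ∑ i, |p i - q i| ≤ Real.sqrt (2 * KLdiv p q) := by
  have hw : ∀ i, 0 < (2 * p i + 4 * q i) / 3 := fun i => by
    have := hp i; have := hq i; positivity
  have hw2 : ∑ i, (2 * p i + 4 * q i) / 3 = 2 := by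
    rw [← sum_div, sum_add_distrib, ← mul_sum, ← mul_sum, hp1, hq1]
    norm_num
  have hterm : ∀ i, |p i - q i| ^ 2 / ((2 * p i + 4 * q i) / 3)
      = 3 * (p i - q i) ^ 2 / (2 * p i + 4 * q i) := fun i => by
    rw [sq_abs, div_div_eq_mul_div, mul_comm]
  have hcs := sq_sum_div_le_sum_sq_div univ (fun i => |p i - q i|) fun i _ => hw i
  simp only [hw2, hterm] at hcs
  apply Real.le_sqrt_of_sq_le
  linarith [sum_sq_div_le_KLdiv hp hq (hp1.trans hq1.symm)]

end KLdiv

theorem abs_vecMul_sub_vecMul_le {ι κ : Type*} [Fintype ι] {A : Matrix ι κ ℝ}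
    (hA : ∀ i j, |A i j| ≤ 1) (y z : ι → ℝ) (j : κ) :
    |(y ᵥ* A) j - (z ᵥ* A) j| ≤ ∑ i, |y i - z i| := by
  rw [← Pi.sub_apply, ← sub_vecMul]
  calc |((y - z) ᵥ* A) j| ≤ ∑ i, |(y - z) i * A i j| := abs_sum_le_sum_abs _ _
    _ ≤ ∑ i, |y i - z i| := sum_le_sum fun i _ => by
      rw [abs_mul]
      exact mul_le_of_le_one_right (abs_nonneg _) (hA i j)

theorem hasDerivAt_KLdiv_add_smul {k : ℕ} {u b : Fin k → ℝ} (d : Fin k → ℝ)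
    (hu : ∀ i, 0 < u i) (hb : ∀ i, 0 < b i) :
    HasDerivAt (fun t : ℝ => KLdiv (u + t • d) b)
      (∑ i, d i * (Real.log (u i / b i) + 1)) 0 := by
  unfold KLdiv
  refine HasDerivAt.fun_sum fun i _ => ?_
  have hline : HasDerivAt (fun t : ℝ => u i + t * d i) (d i) 0 := by
    simpa using ((hasDerivAt_id' (0 : ℝ)).mul_const (d i)).const_add (u i)
  have hlog := (hline.div_const (b i)).log (by simpa using (div_pos (hu i) (hb i)).ne')
  simp only [Pi.add_apply, Pi.smul_apply, smul_eq_mul]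
  refine (hline.mul hlog).congr_deriv ?_
  have := (hu i).ne'
  have := (hb i).ne'
  simp only [zero_mul, add_zero]
  field_simp

theorem nonneg_of_isMinOn_Icc_of_hasDerivAt {φ : ℝ → ℝ} {D δ : ℝ} (hδ : 0 < δ)
    (hmin : IsMinOn φ (Icc 0 δ) 0) (hφ : HasDerivAt φ D 0) : 0 ≤ D := by
  have hδcone : δ ∈ posTangentConeAt (Icc 0 δ) 0 :=
    mem_posTangentConeAt_of_segment_subset (by simp [segment_eq_Icc hδ.le])
  have := hmin.localize.hasFDerivWithinAt_nonneg hφ.hasFDerivAt.hasFDerivWithinAt hδcone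
  simp only [ContinuousLinearMap.toSpanSingleton_apply, smul_eq_mul] at this
  exact nonneg_of_mul_nonneg_right this hδ

def truncSimplex (ν : ℝ) (k : ℕ) : Set (Fin k → ℝ) := {x | (∀ i, ν ≤ x i) ∧ ∑ i, x i = 1}

def IsKLProx {k : ℕ} (ν α : ℝ) (g b u : Fin k → ℝ) : Prop :=
  u ∈ truncSimplex ν k ∧ IsMinOn (fun x => g ⬝ᵥ x + α * KLdiv x b) (truncSimplex ν k) u

namespace IsKLProx

variable {k : ℕ} {ν α : ℝ} {g h b u v : Fin k → ℝ}

theorem pos (hν : 0 < ν) (hu : IsKLProx ν α g b u) (i : Fin k) : 0 < u i :=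
  hν.trans_le (hu.1.1 i)

theorem add_log_le (hν : 0 < ν) (hb : ∀ i, 0 < b i) (hu : IsKLProx ν α g b u) {j : Fin k}
    (hj : ν < u j) (l : Fin k) :
    g j + α * Real.log (u j / b j) ≤ g l + α * Real.log (u l / b l) := by
  set d : Fin k → ℝ := Pi.single l 1 - Pi.single j 1
  have hfeas : ∀ t ∈ Icc 0 (u j - ν), u + t • d ∈ truncSimplex ν k := by
    rintro t ⟨ht0, htj⟩
    refine ⟨fun i => ?_, ?_⟩
    · have := hu.1.1 i
      simp only [d, Pi.add_apply, Pi.smul_apply, Pi.sub_apply, Pi.single_apply, smul_eq_mul]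
      split_ifs with hil hij hij <;> subst_vars <;> linarith
    · simp [d, sum_add_distrib, ← mul_sum, hu.1.2]
  have hmin : IsMinOn (fun t : ℝ => g ⬝ᵥ (u + t • d) + α * KLdiv (u + t • d) b)
      (Icc 0 (u j - ν)) 0 :=
    isMinOn_iff.2 fun t ht => by
      simpa only [zero_smul, add_zero] using isMinOn_iff.1 hu.2 _ (hfeas t ht)
  have hlin : HasDerivAt (fun t : ℝ => g ⬝ᵥ (u + t • d)) (g ⬝ᵥ d) 0 := by
    simp only [dotProduct_add, dotProduct_smul, smul_eq_mul]
    simpa using ((hasDerivAt_id' (0 : ℝ)).mul_const (g ⬝ᵥ d)).const_add (g ⬝ᵥ u)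
  have hderiv := nonneg_of_isMinOn_Icc_of_hasDerivAt (sub_pos.2 hj) hmin
    (hlin.add ((hasDerivAt_KLdiv_add_smul d (hu.pos hν) hb).const_mul α))
  simp only [d, dotProduct_sub, dotProduct_single, mul_one, Pi.sub_apply, Pi.single_apply,
    sub_mul, ite_mul, one_mul, zero_mul, sum_sub_distrib, sum_ite_eq', Finset.mem_univ, ↓reduceIte,
    add_sub_add_right_eq_sub] at hderiv
  linarith

theorem le_exp_mul (hν : 0 < ν) (hα : 0 < α) (hb : ∀ i, 0 < b i) (hu : IsKLProx ν α g b u)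
    (hv : IsKLProx ν α h b v) {r : ℝ} (hgh : ∀ i, |g i - h i| ≤ α * r) (j : Fin k) :
    u j ≤ Real.exp (2 * r) * v j := by
  have hr : 0 ≤ r := nonneg_of_mul_nonneg_right ((abs_nonneg _).trans (hgh j)) hα
  rcases le_or_gt (u j) (v j) with hle | hlt
  · exact hle.trans (le_mul_of_one_le_left (hv.pos hν j).le (Real.one_le_exp (by positivity)))
  obtain ⟨l, hl⟩ : ∃ l, u l < v l := by
    by_contra! hvu
    have := sum_lt_sum (fun i _ => hvu i) ⟨j, mem_univ j, hlt⟩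
    linarith [hu.1.2, hv.1.2]
  have hfoc_u := hu.add_log_le hν hb ((hv.1.1 j).trans_lt hlt) l
  have hfoc_v := hv.add_log_le hν hb ((hu.1.1 l).trans_lt hl) j
  have hlog_l : α * Real.log (u l / b l) ≤ α * Real.log (v l / b l) :=
    mul_le_mul_of_nonneg_left
      (Real.log_le_log (div_pos (hu.pos hν l) (hb l)) (by gcongr; exact (hb l).le)) hα.le
  have hlog_j : α * (Real.log (u j / b j) - Real.log (v j / b j)) ≤ α * (2 * r) := by
    linarith [(abs_le.1 (hgh j)).1, (abs_le.1 (hgh l)).2]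
  rw [Real.log_div (hu.pos hν j).ne' (hb j).ne', Real.log_div (hv.pos hν j).ne' (hb j).ne']
    at hlog_j
  have hlog_uv : Real.log (u j) ≤ 2 * r + Real.log (v j) := by
    linarith [le_of_mul_le_mul_left hlog_j hα]
  rwa [Real.log_le_iff_le_exp (hu.pos hν j), Real.exp_add, Real.exp_log (hv.pos hν j)] at hlog_uv

theorem exp_neg_mul_le_and_le_exp_mul (hν : 0 < ν) (hα : 0 < α) (hb : ∀ i, 0 < b i)
    (hu : IsKLProx ν α g b u) (hv : IsKLProx ν α h b v) {r : ℝ}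
    (hgh : ∀ i, |g i - h i| ≤ α * r) (j : Fin k) :
    Real.exp (-(2 * r)) * v j ≤ u j ∧ u j ≤ Real.exp (2 * r) * v j := by
  refine ⟨?_, hu.le_exp_mul hν hα hb hv hgh j⟩
  rw [Real.exp_neg, inv_mul_le_iff₀ (Real.exp_pos _)]
  exact hv.le_exp_mul hν hα hb hu (fun i => abs_sub_comm (g i) (h i) ▸ hgh i) j

end IsKLProx

section Game

variable {m n : ℕ} {ν α : ℝ} {A : Matrix (Fin m) (Fin n) ℝ}

theorem isKLProx_vecMul {y : Fin m → ℝ} {b x : Fin n → ℝ} (hx : x ∈ truncSimplex ν n)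
    (hmin : ∀ z ∈ truncSimplex ν n,
      y ⬝ᵥ A *ᵥ x + α * KLdiv x b ≤ y ⬝ᵥ A *ᵥ z + α * KLdiv z b) :
    IsKLProx ν α (y ᵥ* A) b x :=
  ⟨hx, isMinOn_iff.2 fun z hz => by simpa only [dotProduct_mulVec] using hmin z hz⟩

theorem isKLProx_vecMul_neg_transpose {x : Fin n → ℝ} {b y : Fin m → ℝ}
    (hy : y ∈ truncSimplex ν m)
    (hmax : ∀ z ∈ truncSimplex ν m,
      z ⬝ᵥ A *ᵥ x - α * KLdiv z b ≤ y ⬝ᵥ A *ᵥ x - α * KLdiv y b) :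
    IsKLProx ν α (x ᵥ* -Aᵀ) b y := by
  refine ⟨hy, isMinOn_iff.2 fun z hz => ?_⟩
  simp only [vecMul_neg, vecMul_transpose, neg_dotProduct, dotProduct_comm (A *ᵥ x)]
  linarith [hmax z hz]

theorem abs_vecMul_sub_vecMul_le_of_KLdiv_le {k l : ℕ} {A : Matrix (Fin k) (Fin l) ℝ}
    (hA : ∀ i j, |A i j| ≤ 1) {p q : Fin k → ℝ} (hp : ∀ i, 0 < p i) (hq : ∀ i, 0 < q i)
    (hp1 : ∑ i, p i = 1) (hq1 : ∑ i, q i = 1) {c : ℝ} (hα : 0 < α)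
    (hKL : KLdiv p q ≤ c * α ^ 2) (j : Fin l) :
    |(p ᵥ* A) j - (q ᵥ* A) j| ≤ α * Real.sqrt (2 * c) := by
  have hsqrt : Real.sqrt (2 * (c * α ^ 2)) = α * Real.sqrt (2 * c) := by
    rw [← mul_assoc, Real.sqrt_mul' _ (sq_nonneg α), Real.sqrt_sq hα.le, mul_comm]
  calc |(p ᵥ* A) j - (q ᵥ* A) j| ≤ ∑ i, |p i - q i| := abs_vecMul_sub_vecMul_le hA p q j
    _ ≤ Real.sqrt (2 * KLdiv p q) := sum_abs_sub_le_sqrt_two_mul_KLdiv hp hq hp1 hq1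
    _ ≤ α * Real.sqrt (2 * c) := hsqrt ▸ Real.sqrt_le_sqrt (by linarith)

end Game

theorem stmt11_general {m n : ℕ}
    (A : Matrix (Fin m) (Fin n) ℝ) (hA : ∀ i j, |A i j| ≤ 1)
    (ν : ℝ) (hν : 0 < ν)
    (α c : ℝ) (hα : 0 < α)
    (x' : Fin n → ℝ) (y' : Fin m → ℝ)
    (hx' : (∀ j, ν ≤ x' j) ∧ ∑ j, x' j = 1)
    (hy' : (∀ i, ν ≤ y' i) ∧ ∑ i, y' i = 1)
    (xs : Fin n → ℝ) (ys : Fin m → ℝ)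
    (hxs : (∀ j, ν ≤ xs j) ∧ ∑ j, xs j = 1)
    (hys : (∀ i, ν ≤ ys i) ∧ ∑ i, ys i = 1)
    (hxsmin : ∀ x : Fin n → ℝ, ((∀ j, ν ≤ x j) ∧ ∑ j, x j = 1) →
      ys ⬝ᵥ A.mulVec xs + α * KLdiv xs x' ≤ ys ⬝ᵥ A.mulVec x + α * KLdiv x x')
    (hysmax : ∀ y : Fin m → ℝ, ((∀ i, ν ≤ y i) ∧ ∑ i, y i = 1) →
      y ⬝ᵥ A.mulVec xs - α * KLdiv y y' ≤ ys ⬝ᵥ A.mulVec xs - α * KLdiv ys y')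
    (hmove : KLdiv xs x' + KLdiv ys y' ≤ c * α ^ 2)
    (xt : Fin n → ℝ) (yt : Fin m → ℝ)
    (hxt : (∀ j, ν ≤ xt j) ∧ ∑ j, xt j = 1)
    (hyt : (∀ i, ν ≤ yt i) ∧ ∑ i, yt i = 1)
    (hxtmin : ∀ x : Fin n → ℝ, ((∀ j, ν ≤ x j) ∧ ∑ j, x j = 1) →
      y' ⬝ᵥ A.mulVec xt + α * KLdiv xt x' ≤ y' ⬝ᵥ A.mulVec x + α * KLdiv x x')
    (hytmax : ∀ y : Fin m → ℝ, ((∀ i, ν ≤ y i) ∧ ∑ i, y i = 1) →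
      y ⬝ᵥ A.mulVec x' - α * KLdiv y y' ≤ yt ⬝ᵥ A.mulVec x' - α * KLdiv yt y') :
    (∀ j, Real.exp (-(2 * Real.sqrt (2 * c))) * xt j ≤ xs j
        ∧ xs j ≤ Real.exp (2 * Real.sqrt (2 * c)) * xt j)
    ∧ (∀ i, Real.exp (-(2 * Real.sqrt (2 * c))) * yt i ≤ ys i
        ∧ ys i ≤ Real.exp (2 * Real.sqrt (2 * c)) * yt i) := by
  have pos {k : ℕ} {w : Fin k → ℝ} (hw : ∀ i, ν ≤ w i) (i : Fin k) : 0 < w i :=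
    hν.trans_le (hw i)
  have hKLx : KLdiv xs x' ≤ c * α ^ 2 := by
    linarith [KLdiv_nonneg (pos hys.1) (pos hy'.1) (hys.2.trans hy'.2.symm)]
  have hKLy : KLdiv ys y' ≤ c * α ^ 2 := by
    linarith [KLdiv_nonneg (pos hxs.1) (pos hx'.1) (hxs.2.trans hx'.2.symm)]
  have hAt : ∀ j i, |(-Aᵀ) j i| ≤ 1 := fun j i => by simpa using hA i j
  have hXs := isKLProx_vecMul hxs hxsmin
  have hXt := isKLProx_vecMul hxt hxtmin
  have hYs := isKLProx_vecMul_neg_transpose hys hysmax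
  have hYt := isKLProx_vecMul_neg_transpose hyt hytmax
  exact ⟨hXs.exp_neg_mul_le_and_le_exp_mul hν hα (pos hx'.1) hXt
      (abs_vecMul_sub_vecMul_le_of_KLdiv_le hA (pos hys.1) (pos hy'.1) hys.2 hy'.2 hα hKLy),
    hYs.exp_neg_mul_le_and_le_exp_mul hν hα (pos hy'.1) hYt
      (abs_vecMul_sub_vecMul_le_of_KLdiv_le hAt (pos hxs.1) (pos hx'.1) hxs.2 hx'.2 hα hKLx)⟩

/-- Stability of the regularized saddle point with respect to the α-best
response, in the ℓ₁-ℓ₁ setup: if the exact saddle point `(x*, y*)` of the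
KL-regularized problem centered at `(x', y')` satisfies
`KL(x*‖x') + KL(y*‖y') ≤ cα²`, then `(x*, y*)` is entrywise `exp(2√(2c))`-multiplicatively
close to the α-best response `(x̃, ỹ)`. -/
theorem stmt11 {m n : ℕ} (hm : 1 ≤ m) (hn : 1 ≤ n)
    (A : Matrix (Fin m) (Fin n) ℝ) (hA : ∀ i j, |A i j| ≤ 1)
    (ν : ℝ) (hν : 0 < ν) (hν' : ν < 1 / max (m : ℝ) (n : ℝ))
    (α c : ℝ) (hα : 0 < α) (hc : 0 < c)
    (x' : Fin n → ℝ) (y' : Fin m → ℝ)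
    (hx' : (∀ j, ν ≤ x' j) ∧ ∑ j, x' j = 1)
    (hy' : (∀ i, ν ≤ y' i) ∧ ∑ i, y' i = 1)
    (xs : Fin n → ℝ) (ys : Fin m → ℝ)
    (hxs : (∀ j, ν ≤ xs j) ∧ ∑ j, xs j = 1)
    (hys : (∀ i, ν ≤ ys i) ∧ ∑ i, ys i = 1)
    (hxsmin : ∀ x : Fin n → ℝ, ((∀ j, ν ≤ x j) ∧ ∑ j, x j = 1) →
      ys ⬝ᵥ A.mulVec xs + α * KLdiv xs x' ≤ ys ⬝ᵥ A.mulVec x + α * KLdiv x x')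
    (hysmax : ∀ y : Fin m → ℝ, ((∀ i, ν ≤ y i) ∧ ∑ i, y i = 1) →
      y ⬝ᵥ A.mulVec xs - α * KLdiv y y' ≤ ys ⬝ᵥ A.mulVec xs - α * KLdiv ys y')
    (hmove : KLdiv xs x' + KLdiv ys y' ≤ c * α ^ 2)
    (xt : Fin n → ℝ) (yt : Fin m → ℝ)
    (hxt : (∀ j, ν ≤ xt j) ∧ ∑ j, xt j = 1)
    (hyt : (∀ i, ν ≤ yt i) ∧ ∑ i, yt i = 1)
    (hxtmin : ∀ x : Fin n → ℝ, ((∀ j, ν ≤ x j) ∧ ∑ j, x j = 1) →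
      y' ⬝ᵥ A.mulVec xt + α * KLdiv xt x' ≤ y' ⬝ᵥ A.mulVec x + α * KLdiv x x')
    (hytmax : ∀ y : Fin m → ℝ, ((∀ i, ν ≤ y i) ∧ ∑ i, y i = 1) →
      y ⬝ᵥ A.mulVec x' - α * KLdiv y y' ≤ yt ⬝ᵥ A.mulVec x' - α * KLdiv yt y') :
    (∀ j, Real.exp (-(2 * Real.sqrt (2 * c))) * xt j ≤ xs j
        ∧ xs j ≤ Real.exp (2 * Real.sqrt (2 * c)) * xt j)
    ∧ (∀ i, Real.exp (-(2 * Real.sqrt (2 * c))) * yt i ≤ ys i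
        ∧ ys i ≤ Real.exp (2 * Real.sqrt (2 * c)) * yt i) :=
  stmt11_general A hA ν hν α c hα x' y' hx' hy' xs ys hxs hys hxsmin hysmax hmove xt yt hxt hyt
    hxtmin hytmax
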